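/- arXiv:2502.10840 — 2 statements merged into one kernel-verified Lean document; each statement's English description precedes it below -/
import Mathlib

section
/- Let N be a positive natural number, m a natural number, a : Fin m → ℂ a family of amplitudes, and ν : Fin m → ℝ a family of frequencies. Define the sampled signal x : ℕ → ℂ by x n = Σ_{j} a j · e^{2πi·(ν j)·n/N} and its discrete Fourier transform X k = (1/√N) · Σ_{n=0}^{N−1} x n · e^{−2πi·k·n/N}. Suppose j₀ ∈ Fin m and k₀ is a natural number with k₀ < N such that ν j₀ = k₀ (the frequency lies exactly on the Fourier grid), and suppose that for every j ≠ j₀ the number (ν j − k₀)/N is not an integer. Then |X k₀ − a j₀ · √N| ≤ Σ_{j ≠ j₀} |a j| · |sin(π(ν j − k₀))| / (√N · |sin(π(ν j − k₀)/N)|). -/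
/-!
Against the DFT kernel of bin `k₀`, the component of frequency `ν j` becomes the geometric sum
`Σ_{n<N} q^n` with `q = e^{2πi (ν j - k₀)/N}`. For the on-grid component `q = 1` and the sum is
`N`, which produces `a j₀ √N`; for every other component it is the Dirichlet kernel, of modulus
`|sin π(ν j - k₀)| / |sin (π(ν j - k₀)/N)|`, and the triangle inequality finishes.
-/

open Real Finset

namespace Complex

lemma norm_exp_two_pi_I_mul_sub_one (t : ℝ) :
    ‖exp (2 * π * I * t) - 1‖ = 2 * |Real.sin (π * t)| := by
  have h : 2 * π * I * t = I * ((2 * π * t : ℝ) : ℂ) := by push_cast; ring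
  rw [h, norm_exp_I_mul_ofReal_sub_one, norm_mul, Real.norm_two, Real.norm_eq_abs]
  ring_nf

lemma exp_two_pi_I_mul_ne_one {t : ℝ} (ht : ∀ z : ℤ, t ≠ z) : exp (2 * π * I * t) ≠ 1 := by
  rw [Ne, exp_eq_one_iff]
  rintro ⟨z, hz⟩
  apply ht z
  have h2πI : 2 * π * I ≠ 0 := by simp [pi_ne_zero, I_ne_zero]
  exact_mod_cast mul_left_cancel₀ h2πI (hz.trans (mul_comm _ _))

lemma norm_geom_sum_exp_two_pi_I_div (N : ℕ) {t : ℝ} (ht : ∀ z : ℤ, t / N ≠ z) :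
    ‖∑ n ∈ range N, exp (2 * π * I * (t / N : ℝ)) ^ n‖
      = |Real.sin (π * t)| / |Real.sin (π * t / N)| := by
  -- `t / 0 = 0` is an integer
  have hN : (N : ℝ) ≠ 0 := fun h ↦ ht 0 (by simp [h])
  have hpow : exp (2 * π * I * (t / N : ℝ)) ^ N = exp (2 * π * I * t) := by
    have hNC : (N : ℂ) ≠ 0 := mod_cast hN
    rw [← exp_nat_mul]
    congr 1
    push_cast
    field_simp
  rw [geom_sum_eq (exp_two_pi_I_mul_ne_one ht), norm_div, hpow,
    norm_exp_two_pi_I_mul_sub_one, norm_exp_two_pi_I_mul_sub_one, mul_div_assoc',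
    mul_div_mul_left _ _ two_ne_zero]

end Complex

open Complex in
lemma sum_range_sum_exp_mul_exp_neg {ι : Type*} [Fintype ι] (N : ℕ) (a : ι → ℂ) (ν : ι → ℝ)
    (k : ℕ) :
    ∑ n ∈ range N, (∑ j, a j * exp (2 * π * I * ν j * n / N)) * exp (-(2 * π * I * k * n / N))
      = ∑ j, a j * ∑ n ∈ range N, exp (2 * π * I * ((ν j - k) / N : ℝ)) ^ n := by
  simp only [sum_mul, mul_sum]
  rw [sum_comm]
  congr! 2 with j - n
  rw [mul_assoc, ← Complex.exp_add, ← Complex.exp_nat_mul]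
  congr 2
  push_cast
  ring

theorem dft_spectral_leakage_bound_general (N : ℕ) (m : ℕ)
    (a : Fin m → ℂ) (ν : Fin m → ℝ)
    (x : ℕ → ℂ)
    (hx : ∀ n : ℕ, x n = ∑ j, a j * Complex.exp (2 * π * Complex.I * ν j * n / N))
    (X : ℕ → ℂ)
    (hX : ∀ k : ℕ, X k = (1 / (Real.sqrt N : ℂ)) * ∑ n ∈ Finset.range N,
        x n * Complex.exp (-(2 * π * Complex.I * k * n / N)))
    (j₀ : Fin m) (k₀ : ℕ) (hgrid : ν j₀ = k₀)
    (hoff : ∀ j : Fin m, j ≠ j₀ → ∀ z : ℤ, (ν j - k₀) / N ≠ (z : ℝ)) :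
    ‖X k₀ - a j₀ * Real.sqrt N‖
      ≤ ∑ j ∈ Finset.univ.erase j₀,
          ‖a j‖ * |Real.sin (π * (ν j - k₀))| /
            (Real.sqrt N * |Real.sin (π * (ν j - k₀) / N)|) := by
  set S : Fin m → ℂ :=
    fun j ↦ ∑ n ∈ range N, Complex.exp (2 * π * Complex.I * ((ν j - k₀) / N : ℝ)) ^ n
  have hX₀ : X k₀ = (√N : ℂ)⁻¹ * ∑ j, a j * S j := by
    simp only [hX, hx, one_div]
    rw [sum_range_sum_exp_mul_exp_neg]
  have hS₀ : S j₀ = N := by simp [S, hgrid]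
  have hsplit : X k₀ - a j₀ * √N = (√N : ℂ)⁻¹ * ∑ j ∈ univ.erase j₀, a j * S j := by
    have hN : (√N : ℂ)⁻¹ * N = √N := by
      rw [← div_eq_inv_mul]
      exact_mod_cast Real.div_sqrt
    rw [hX₀, ← add_sum_erase _ _ (mem_univ j₀), hS₀]
    linear_combination a j₀ * hN
  have hS : ∀ j ∈ univ.erase j₀,
      ‖S j‖ = |Real.sin (π * (ν j - k₀))| / |Real.sin (π * (ν j - k₀) / N)| :=
    fun j hj ↦ Complex.norm_geom_sum_exp_two_pi_I_div N (hoff j (ne_of_mem_erase hj))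
  calc ‖X k₀ - a j₀ * √N‖ = (√N)⁻¹ * ‖∑ j ∈ univ.erase j₀, a j * S j‖ := by
        rw [hsplit, norm_mul, norm_inv, Complex.norm_real, norm_of_nonneg (sqrt_nonneg _)]
    _ ≤ (√N)⁻¹ * ∑ j ∈ univ.erase j₀, ‖a j‖ * ‖S j‖ := by
        gcongr
        exact norm_sum_le_of_le _ fun j _ ↦ (norm_mul _ _).le
    _ = _ := by
        rw [mul_sum]
        refine sum_congr rfl fun j hj ↦ ?_
        rw [hS j hj]
        ring

/-- Spectral-leakage bound behind the paper's Theorem 1: if the signal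
`x n = Σ_j a j e^{2πi ν_j n/N}` has one frequency `ν j₀ = k₀` exactly on the Fourier
grid and all other frequencies off-grid (`(ν j − k₀)/N` not an integer), then the
DFT value `X k₀` deviates from `a j₀ √N` by at most the aggregate leakage of the
other components. -/
theorem dft_spectral_leakage_bound (N : ℕ) (hN : 0 < N) (m : ℕ)
    (a : Fin m → ℂ) (ν : Fin m → ℝ)
    (x : ℕ → ℂ)
    (hx : ∀ n : ℕ, x n = ∑ j, a j * Complex.exp (2 * π * Complex.I * ν j * n / N))
    (X : ℕ → ℂ)
    (hX : ∀ k : ℕ, X k = (1 / (Real.sqrt N : ℂ)) * ∑ n ∈ Finset.range N,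
        x n * Complex.exp (-(2 * π * Complex.I * k * n / N)))
    (j₀ : Fin m) (k₀ : ℕ) (hk₀ : k₀ < N) (hgrid : ν j₀ = k₀)
    (hoff : ∀ j : Fin m, j ≠ j₀ → ∀ z : ℤ, (ν j - k₀) / N ≠ (z : ℝ)) :
    ‖X k₀ - a j₀ * Real.sqrt N‖
      ≤ ∑ j ∈ Finset.univ.erase j₀,
          ‖a j‖ * |Real.sin (π * (ν j - k₀))| /
            (Real.sqrt N * |Real.sin (π * (ν j - k₀) / N)|) :=
  dft_spectral_leakage_bound_general N m a ν x hx X hX j₀ k₀ hgrid hoff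
end

section
/- In the setting of the spectral-leakage bound: let N be a positive natural number, m a natural number, a : Fin m → ℂ, ν : Fin m → ℝ, x n = Σ_{j} a j · e^{2πi·(ν j)·n/N}, and X k = (1/√N) · Σ_{n=0}^{N−1} x n · e^{−2πi·k·n/N}. Suppose j₀ ∈ Fin m and k₀ < N is a natural number with ν j₀ = k₀, that (ν j − k₀)/N is not an integer for every j ≠ j₀, and that the amplitude a j₀ dominates the total leakage: |a j₀| · N > Σ_{j ≠ j₀} |a j| / |sin(π(ν j − k₀)/N)|. Then X k₀ ≠ 0, i.e., the on-grid frequency ν j₀ is observable in the discrete Fourier transform of the signal. -/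
/-! Substituting the signal into the DFT and exchanging the sums, `√N · X k₀` is a sum over
components of `a j` times the geometric sum of `w_j = e^{2πi(ν j − k₀)/N}`. For `j₀` this ratio is
`1` and the geometric sum is `N`; for every other `j` the ratio is a unit complex number with
`|w_j − 1| = 2|sin(π(ν j − k₀)/N)|`, so its geometric sum `(w_j^N − 1)/(w_j − 1)` has modulus at most
`1 / |sin(π(ν j − k₀)/N)|`. The dominance hypothesis then keeps the on-grid term `a j₀ N` from being
cancelled by the leakage. -/

open Real

open Finset

theorem sin_pi_mul_ne_zero_of_ne_intCast {θ : ℝ} (hθ : ∀ z : ℤ, θ ≠ z) : Real.sin (π * θ) ≠ 0 :=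
  Real.sin_ne_zero_iff.mpr fun z hz => hθ z (mul_left_cancel₀ pi_ne_zero (by linarith))

theorem norm_cexp_two_pi_I_mul_sub_one (θ : ℝ) :
    ‖Complex.exp (2 * π * Complex.I * θ) - 1‖ = 2 * |Real.sin (π * θ)| := by
  have h := Complex.norm_exp_I_mul_ofReal_sub_one (2 * π * θ)
  rw [show Complex.I * ((2 * π * θ : ℝ) : ℂ) = 2 * π * Complex.I * θ by push_cast; ring,
    show 2 * π * θ / 2 = π * θ by ring] at h
  rw [h, norm_mul, Real.norm_eq_abs, Real.norm_eq_abs, abs_two]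

theorem norm_geom_sum_cexp_two_pi_I_mul_le (N : ℕ) {θ : ℝ} (hθ : Real.sin (π * θ) ≠ 0) :
    ‖∑ n ∈ range N, Complex.exp (2 * π * Complex.I * θ) ^ n‖ ≤ 1 / |Real.sin (π * θ)| := by
  have hw_norm : ‖Complex.exp (2 * π * Complex.I * θ)‖ = 1 := by
    rw [show (2 * π * Complex.I * θ : ℂ) = ((2 * π * θ : ℝ) : ℂ) * Complex.I by push_cast; ring]
    exact Complex.norm_exp_ofReal_mul_I _
  set w := Complex.exp (2 * π * Complex.I * θ)
  have hsin : 0 < 2 * |Real.sin (π * θ)| := by positivity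
  have hw_sub : ‖w - 1‖ = 2 * |Real.sin (π * θ)| := norm_cexp_two_pi_I_mul_sub_one θ
  have hw_ne : w ≠ 1 := fun h => by simp [h] at hw_sub; exact hθ hw_sub
  have hnum : ‖w ^ N - 1‖ ≤ 2 := by
    calc ‖w ^ N - 1‖ ≤ ‖w ^ N‖ + ‖(1 : ℂ)‖ := norm_sub_le _ _
      _ = 2 := by rw [norm_pow, hw_norm]; norm_num
  calc ‖∑ n ∈ range N, w ^ n‖ = ‖w ^ N - 1‖ / (2 * |Real.sin (π * θ)|) := by
        rw [geom_sum_eq hw_ne, norm_div, hw_sub]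
    _ ≤ 2 / (2 * |Real.sin (π * θ)|) := by gcongr
    _ = 1 / |Real.sin (π * θ)| := by field_simp

theorem sum_range_sum_cexp_mul_cexp_neg_eq_sum_mul_geom_sum {ι : Type*} [Fintype ι] (N : ℕ) (a : ι → ℂ) (ν : ι → ℝ) (k : ℝ) :
    ∑ n ∈ range N, (∑ j, a j * Complex.exp (2 * π * Complex.I * ν j * n / N)) *
        Complex.exp (-(2 * π * Complex.I * k * n / N)) =
      ∑ j, a j * ∑ n ∈ range N, Complex.exp (2 * π * Complex.I * ((ν j - k) / N : ℝ)) ^ n := by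
  simp only [sum_mul, mul_sum]
  rw [sum_comm]
  refine sum_congr rfl fun j _ => sum_congr rfl fun n _ => ?_
  rw [mul_assoc, ← Complex.exp_add, ← Complex.exp_nat_mul]
  congr 2
  push_cast
  ring

theorem norm_sum_mul_geom_sum_cexp_le {ι : Type*} (s : Finset ι) (N : ℕ) (a : ι → ℂ) (θ : ι → ℝ)
    (hθ : ∀ j ∈ s, Real.sin (π * θ j) ≠ 0) :
    ‖∑ j ∈ s, a j * ∑ n ∈ range N, Complex.exp (2 * π * Complex.I * θ j) ^ n‖ ≤
      ∑ j ∈ s, ‖a j‖ / |Real.sin (π * θ j)| := by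
  refine (norm_sum_le _ _).trans (sum_le_sum fun j hj => ?_)
  rw [norm_mul, div_eq_mul_one_div]
  exact mul_le_mul_of_nonneg_left (norm_geom_sum_cexp_two_pi_I_mul_le N (hθ j hj)) (norm_nonneg _)

theorem dft_on_grid_frequency_observable_general (N : ℕ) (hN : 0 < N) (m : ℕ)
    (a : Fin m → ℂ) (ν : Fin m → ℝ)
    (x : ℕ → ℂ)
    (hx : ∀ n : ℕ, x n = ∑ j, a j * Complex.exp (2 * π * Complex.I * ν j * n / N))
    (X : ℕ → ℂ)
    (hX : ∀ k : ℕ, X k = (1 / (Real.sqrt N : ℂ)) * ∑ n ∈ Finset.range N,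
        x n * Complex.exp (-(2 * π * Complex.I * k * n / N)))
    (j₀ : Fin m) (k₀ : ℕ) (hgrid : ν j₀ = k₀)
    (hoff : ∀ j : Fin m, j ≠ j₀ → ∀ z : ℤ, (ν j - k₀) / N ≠ (z : ℝ))
    (hdom : ‖a j₀‖ * N >
      ∑ j ∈ Finset.univ.erase j₀,
        ‖a j‖ / |Real.sin (π * (ν j - k₀) / N)|) :
    X k₀ ≠ 0 := by
  have hdft := sum_range_sum_cexp_mul_cexp_neg_eq_sum_mul_geom_sum N a ν k₀
  simp only [Complex.ofReal_natCast] at hdft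
  simp only [hX, hx, hdft]
  refine mul_ne_zero (by simp [hN.ne']) ?_
  rw [← add_sum_erase _ _ (mem_univ j₀), hgrid, sub_self]
  simp only [zero_div, Complex.ofReal_zero, mul_zero, Complex.exp_zero, one_pow, sum_const,
    card_range, nsmul_eq_mul, mul_one]
  have hleak := norm_sum_mul_geom_sum_cexp_le (univ.erase j₀) N a (fun j => (ν j - k₀) / N)
    fun j hj => sin_pi_mul_ne_zero_of_ne_intCast (hoff j (ne_of_mem_erase hj))
  simp only [← mul_div_assoc] at hleak
  refine norm_pos_iff.mp (lt_of_lt_of_le ?_ (norm_sub_le_norm_add _ _))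
  rw [norm_mul, Complex.norm_natCast]
  linarith

/-- The paper's Theorem 1 (observability threshold): in the spectral-leakage setting,
if the on-grid amplitude dominates the total leakage,
`|a j₀| N > Σ_{j ≠ j₀} |a j| / |sin(π(ν j − k₀)/N)|`, then `X k₀ ≠ 0`, i.e. the
frequency `ν j₀` is observable in the discrete Fourier transform. -/
theorem dft_on_grid_frequency_observable (N : ℕ) (hN : 0 < N) (m : ℕ)
    (a : Fin m → ℂ) (ν : Fin m → ℝ)
    (x : ℕ → ℂ)
    (hx : ∀ n : ℕ, x n = ∑ j, a j * Complex.exp (2 * π * Complex.I * ν j * n / N))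
    (X : ℕ → ℂ)
    (hX : ∀ k : ℕ, X k = (1 / (Real.sqrt N : ℂ)) * ∑ n ∈ Finset.range N,
        x n * Complex.exp (-(2 * π * Complex.I * k * n / N)))
    (j₀ : Fin m) (k₀ : ℕ) (hk₀ : k₀ < N) (hgrid : ν j₀ = k₀)
    (hoff : ∀ j : Fin m, j ≠ j₀ → ∀ z : ℤ, (ν j - k₀) / N ≠ (z : ℝ))
    (hdom : ‖a j₀‖ * N >
      ∑ j ∈ Finset.univ.erase j₀,
        ‖a j‖ / |Real.sin (π * (ν j - k₀) / N)|) :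
    X k₀ ≠ 0 :=
  dft_on_grid_frequency_observable_general N hN m a ν x hx X hX j₀ k₀ hgrid hoff hdom
end
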